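/- arXiv:2203.11998 — 3 statements merged into one kernel-verified Lean document; each statement's English description precedes it below -/
import Mathlib

section
/- The double integral of (ξ − σ)|ξ − σ| over the rectangle [0, 1] × [0, 2] satisfies ∫_{0}^{1} ∫_{0}^{2} (ξ − σ)|ξ − σ| dσ dξ = −7/6, and consequently, with R̄ = [0, 1] × [0, 2], μ(x, y) = 1, α(x, ξ, σ) = −x² · (6/7) and β(y, ξ, σ) = y² · (6/7), the function φ(x, y) = (x − y)|x − y| is continuously differentiable on ℝ² with ∂ₓφ(x, y) = 2|x − y| and ∂_yφ(x, y) = −2|x − y|, and is an eigenfunction with eigenvalue λ = −1; that is, for all (x, y) ∈ R̄ one has −∂ₓφ(x, y) − ∂_yφ(x, y) − φ(x, y) = −φ(x, y), together with the boundary conditions φ(x, 0) = ∬_{R̄} α(x, ξ, σ) φ(ξ, σ) dξ dσ for all x ∈ [0, 1] and φ(0, y) = ∬_{R̄} β(y, ξ, σ) φ(ξ, σ) dξ dσ for all y ∈ [0, 2]. -/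
open Real Set MeasureTheory

/-! The antiderivatives of `t ↦ tⁿ|t|` are `t ↦ tⁿ⁺¹|t| / (n + 2)`, so the double integral
is computed by the fundamental theorem of calculus twice, after Fubini on the rectangle. The
boundary conditions then say `x|x| = -x² · (6/7) · (-7/6)` and `-y|y| = y² · (6/7) · (-7/6)`,
and the eigenvalue equation holds because `∂ₓφ + ∂_yφ = 0`. -/

theorem hasDerivAt_mul_abs (t : ℝ) : HasDerivAt (fun t : ℝ => t * |t|) (2 * |t|) t := by
  rcases eq_or_ne t 0 with rfl | ht
  · simp only [abs_zero, mul_zero]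
    rw [hasDerivAt_iff_tendsto_slope_zero]
    refine ((continuous_abs.tendsto' 0 0 abs_zero).mono_left nhdsWithin_le_nhds).congr' ?_
    filter_upwards [self_mem_nhdsWithin] with h hh
    rw [mem_compl_singleton_iff] at hh
    simp [hh]
  · exact ((hasDerivAt_id' t).mul (hasDerivAt_abs ht)).congr_deriv (by rw [self_mul_sign]; ring)

theorem hasDerivAt_pow_succ_mul_abs (n : ℕ) (t : ℝ) :
    HasDerivAt (fun t : ℝ => t ^ (n + 1) * |t|) ((n + 2) * (t ^ n * |t|)) t := by
  induction n with
  | zero => simpa using hasDerivAt_mul_abs t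
  | succ n ih =>
    have hfun : (fun t : ℝ => t ^ (n + 1 + 1) * |t|) =
        (fun t => t) * fun t => t ^ (n + 1) * |t| := by
      ext s
      simp only [Pi.mul_apply]
      ring
    rw [hfun]
    exact ((hasDerivAt_id' t).mul ih).congr_deriv (by push_cast; ring)

theorem integral_pow_mul_abs (n : ℕ) (a b : ℝ) :
    ∫ t in a..b, t ^ n * |t| = (b ^ (n + 1) * |b| - a ^ (n + 1) * |a|) / (n + 2) := by
  have hderiv (t : ℝ) :
      HasDerivAt (fun t : ℝ => t ^ (n + 1) * |t| / (n + 2)) (t ^ n * |t|) t := by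
    refine ((hasDerivAt_pow_succ_mul_abs n t).div_const (n + 2 : ℝ)).congr_deriv ?_
    field_simp
  rw [intervalIntegral.integral_eq_sub_of_hasDerivAt (fun t _ => hderiv t)
    ((by fun_prop : Continuous fun t : ℝ => t ^ n * |t|).intervalIntegrable a b)]
  ring

theorem integral_sub_mul_abs_sub (ξ a b : ℝ) :
    ∫ σ in a..b, (ξ - σ) * |ξ - σ| =
      ((ξ - a) ^ 2 * |ξ - a| - (ξ - b) ^ 2 * |ξ - b|) / 3 := by
  rw [intervalIntegral.integral_comp_sub_left (fun t => t * |t|)]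
  convert integral_pow_mul_abs 1 (ξ - b) (ξ - a) using 1 <;> norm_num

theorem integral_integral_sub_mul_abs_sub :
    ∫ ξ in (0 : ℝ)..1, ∫ σ in (0 : ℝ)..2, (ξ - σ) * |ξ - σ| = -7 / 6 := by
  simp only [integral_sub_mul_abs_sub, sub_zero]
  rw [intervalIntegral.integral_div, intervalIntegral.integral_sub
    (Continuous.intervalIntegrable (by fun_prop) _ _)
    (Continuous.intervalIntegrable (by fun_prop) _ _),
    intervalIntegral.integral_comp_sub_right (fun t => t ^ 2 * |t|), integral_pow_mul_abs,
    integral_pow_mul_abs]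
  norm_num

theorem setIntegral_Icc_prod_Icc {E : Type*} [NormedAddCommGroup E] [NormedSpace ℝ E]
    [CompleteSpace E] {f : ℝ × ℝ → E} {a b c d : ℝ} (hab : a ≤ b) (hcd : c ≤ d)
    (hf : IntegrableOn f (Icc a b ×ˢ Icc c d)) :
    ∫ p in Icc a b ×ˢ Icc c d, f p = ∫ x in a..b, ∫ y in c..d, f (x, y) := by
  rw [Measure.volume_eq_prod] at hf ⊢
  rw [setIntegral_prod f hf, intervalIntegral.integral_of_le hab, integral_Icc_eq_integral_Ioc]
  simp_rw [intervalIntegral.integral_of_le hcd, integral_Icc_eq_integral_Ioc]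

theorem contDiff_mul_abs : ContDiff ℝ 1 fun t : ℝ => t * |t| := by
  rw [contDiff_one_iff_deriv]
  refine ⟨fun t => (hasDerivAt_mul_abs t).differentiableAt, ?_⟩
  rw [funext fun t => (hasDerivAt_mul_abs t).deriv]
  fun_prop

/-- Example 2.2: `∫_0^1 ∫_0^2 (ξ−σ)|ξ−σ| dσ dξ = −7/6`, and on
`R̄ = [0, 1] × [0, 2]` with `μ ≡ 1`, `α(x, ξ, σ) = −x²·(6/7)`, `β(y, ξ, σ) = y²·(6/7)`,
the function `φ(x, y) = (x−y)|x−y|` is `C¹` on `ℝ²` with `∂ₓφ = 2|x−y|` and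
`∂_yφ = −2|x−y|`, and is an eigenfunction with eigenvalue `λ = −1`:
`−∂ₓφ − ∂_yφ − φ = −φ` on `R̄` together with the two boundary conditions. -/
theorem stmt11 :
    (∫ ξ in (0 : ℝ)..1, ∫ σ in (0 : ℝ)..2, (ξ - σ) * |ξ - σ|) = -7 / 6 ∧
    ContDiff ℝ 1 (fun p : ℝ × ℝ => (p.1 - p.2) * |p.1 - p.2|) ∧
    (∀ x y : ℝ,
      HasDerivAt (fun x' => (x' - y) * |x' - y|) (2 * |x - y|) x ∧
      HasDerivAt (fun y' => (x - y') * |x - y'|) (-(2 * |x - y|)) y) ∧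
    (∀ x ∈ Icc (0 : ℝ) 1, ∀ y ∈ Icc (0 : ℝ) 2,
      -(deriv (fun x' => (x' - y) * |x' - y|) x) -
          deriv (fun y' => (x - y') * |x - y'|) y -
          (x - y) * |x - y| = -((x - y) * |x - y|)) ∧
    (∀ x ∈ Icc (0 : ℝ) 1,
      (x - 0) * |x - 0| =
        ∫ p in Icc (0 : ℝ) 1 ×ˢ Icc (0 : ℝ) 2,
          -x ^ 2 * (6 / 7) * ((p.1 - p.2) * |p.1 - p.2|)) ∧
    (∀ y ∈ Icc (0 : ℝ) 2,
      (0 - y) * |0 - y| =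
        ∫ p in Icc (0 : ℝ) 1 ×ˢ Icc (0 : ℝ) 2,
          y ^ 2 * (6 / 7) * ((p.1 - p.2) * |p.1 - p.2|)) := by
  have hpartial (x y : ℝ) :
      HasDerivAt (fun x' => (x' - y) * |x' - y|) (2 * |x - y|) x ∧
      HasDerivAt (fun y' => (x - y') * |x - y'|) (-(2 * |x - y|)) y :=
    ⟨(hasDerivAt_mul_abs (x - y)).comp_sub_const x y,
      (hasDerivAt_mul_abs (x - y)).comp_const_sub x y⟩
  have hintegral :
      ∫ p in Icc (0 : ℝ) 1 ×ˢ Icc (0 : ℝ) 2, (p.1 - p.2) * |p.1 - p.2| = -7 / 6 := by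
    rw [setIntegral_Icc_prod_Icc zero_le_one zero_le_two
      ((by fun_prop : Continuous fun p : ℝ × ℝ => (p.1 - p.2) * |p.1 - p.2|).continuousOn
        |>.integrableOn_compact (isCompact_Icc.prod isCompact_Icc))]
    exact integral_integral_sub_mul_abs_sub
  refine ⟨integral_integral_sub_mul_abs_sub,
    contDiff_mul_abs.comp (contDiff_fst.sub contDiff_snd), hpartial,
    fun x _ y _ => ?_, fun x hx => ?_, fun y hy => ?_⟩
  · rw [(hpartial x y).1.deriv, (hpartial x y).2.deriv]
    ring
  · rw [integral_const_mul, hintegral, sub_zero, abs_of_nonneg hx.1]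
    ring
  · rw [integral_const_mul, hintegral, zero_sub, abs_neg, abs_of_nonneg hy.1]
    ring
end

section
/- The Lebesgue measure of the set {(ξ, σ) ∈ [0, 1] × [0, 2] : σ ≤ ξ} equals 1/2, and consequently, with R̄ = [0, 1] × [0, 2], μ(x, y) = 1, α(x, ξ, σ) = 2 · 𝟙_{[0,∞)}(x) and β(y, ξ, σ) = 2 · 𝟙_{(−∞,0]}(y), the discontinuous indicator function φ(x, y) = 𝟙_{[0,∞)}(x − y) is an eigenfunction with eigenvalue λ = −1; that is, for all (x, y) ∈ R̄ with x ≠ y one has −∂ₓφ(x, y) − ∂_yφ(x, y) − φ(x, y) = −φ(x, y) (the classical partial derivatives existing and vanishing there), together with the boundary conditions φ(x, 0) = ∬_{R̄} α(x, ξ, σ) φ(ξ, σ) dξ dσ for all x ∈ [0, 1] and φ(0, y) = ∬_{R̄} β(y, ξ, σ) φ(ξ, σ) dξ dσ for all y ∈ [0, 2]. -/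
open Real Set MeasureTheory

/-! `φ(x, y) = 𝟙_{[0,∞)}(x − y)` is locally constant off the diagonal, so both partial
derivatives vanish there. Each boundary integral is the constant kernel value times
`∬ φ = |{σ ≤ ξ}| = 1/2`, the area of a triangle computed by Fubini over vertical sections
`[0, ξ]`; with the factor `2` this reproduces the boundary values of `φ`. -/

open Filter Topology in
theorem hasDerivAt_ite_nonneg_of_ne_zero {𝕜 F : Type*} [NontriviallyNormedField 𝕜]
    [NormedAddCommGroup F] [NormedSpace 𝕜 F] {g : 𝕜 → ℝ} {x : 𝕜} (hg : ContinuousAt g x)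
    (hx : g x ≠ 0) (a b : F) :
    HasDerivAt (fun t => if 0 ≤ g t then a else b) 0 x := by
  have sign_eventually_const : ∀ᶠ t in 𝓝 x, (0 ≤ g t ↔ 0 ≤ g x) := by
    rcases hx.lt_or_gt with hneg | hpos
    · filter_upwards [hg.eventually (gt_mem_nhds hneg)] with t ht
      simp only [not_le.2 ht, not_le.2 hneg]
    · filter_upwards [hg.eventually (lt_mem_nhds hpos)] with t ht
      simp only [ht.le, hpos.le]
  refine (hasDerivAt_const x (if 0 ≤ g x then a else b)).congr_of_eventuallyEq ?_
  filter_upwards [sign_eventually_const] with t ht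
  simp only [ht]

theorem volume_region_between_cc_eq_lintegral {α : Type*} [MeasurableSpace α] {μ : Measure α}
    {f g : α → ℝ} {s : Set α} (hf : Measurable f) (hg : Measurable g) (hs : MeasurableSet s) :
    μ.prod volume {p : α × ℝ | p.1 ∈ s ∧ p.2 ∈ Icc (f p.1) (g p.1)} =
      ∫⁻ x in s, ENNReal.ofReal (g x - f x) ∂μ := by
  classical
  rw [Measure.prod_apply (measurableSet_region_between_cc hf hg hs), ← lintegral_indicator hs]
  refine lintegral_congr fun x => ?_
  by_cases hx : x ∈ s
  · rw [indicator_of_mem hx, ← Real.volume_Icc]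
    congr 1
    ext y
    simp [hx]
  · simp [preimage, hx]

theorem volume_triangle {a b : ℝ} (ha : 0 ≤ a) (hab : a ≤ b) :
    volume {p : ℝ × ℝ | p ∈ Icc 0 a ×ˢ Icc 0 b ∧ p.2 ≤ p.1} = ENNReal.ofReal (a ^ 2 / 2) := by
  have region : {p : ℝ × ℝ | p ∈ Icc 0 a ×ˢ Icc 0 b ∧ p.2 ≤ p.1} =
      {p : ℝ × ℝ | p.1 ∈ Icc 0 a ∧ p.2 ∈ Icc ((fun _ => 0) p.1) (id p.1)} := by
    ext ⟨x, y⟩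
    simp only [mem_ofPred_eq, mem_prod, mem_Icc, id]
    constructor
    · rintro ⟨⟨hx, hy⟩, hyx⟩
      exact ⟨hx, hy.1, hyx⟩
    · rintro ⟨hx, hy, hyx⟩
      exact ⟨⟨hx, hy, hyx.trans (hx.2.trans hab)⟩, hyx⟩
  rw [region, Measure.volume_eq_prod,
    volume_region_between_cc_eq_lintegral measurable_const measurable_id measurableSet_Icc,
    ← ofReal_integral_eq_lintegral_ofReal]
  · simp [integral_Icc_eq_integral_Ioc, ← intervalIntegral.integral_of_le ha, integral_id]
  · exact (continuous_id.sub continuous_const).integrableOn_Icc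
  · exact ae_restrict_of_forall_mem measurableSet_Icc fun x hx => by simpa using hx.1

theorem setIntegral_ite_sub_nonneg {a b : ℝ} (ha : 0 ≤ a) (hab : a ≤ b) :
    ∫ p in Icc 0 a ×ˢ Icc 0 b, (if 0 ≤ p.1 - p.2 then (1 : ℝ) else 0) = a ^ 2 / 2 := by
  have indicator_eq : (fun p : ℝ × ℝ => if 0 ≤ p.1 - p.2 then (1 : ℝ) else 0) =
      {p : ℝ × ℝ | p.2 ≤ p.1}.indicator fun _ => 1 := by
    ext p
    simp [indicator_apply, sub_nonneg]
  rw [indicator_eq, setIntegral_indicator (measurableSet_le measurable_snd measurable_fst),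
    setIntegral_const, measureReal_def, inter_def]
  simp only [mem_ofPred_eq]
  rw [volume_triangle ha hab, ENNReal.toReal_ofReal (by positivity), smul_eq_mul, mul_one]

/-- Example 2.4: the Lebesgue measure of
`{(ξ, σ) ∈ [0,1]×[0,2] : σ ≤ ξ}` is `1/2`, and on `R̄ = [0, 1] × [0, 2]` with `μ ≡ 1`,
`α(x, ξ, σ) = 2·𝟙_{[0,∞)}(x)`, `β(y, ξ, σ) = 2·𝟙_{(−∞,0]}(y)`, the discontinuous
function `φ(x, y) = 𝟙_{[0,∞)}(x − y)` is an eigenfunction with eigenvalue `λ = −1`: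
at every `(x, y) ∈ R̄` with `x ≠ y` the classical partial derivatives exist and vanish,
so `−∂ₓφ − ∂_yφ − φ = −φ`, together with the two boundary conditions. -/
theorem stmt13 :
    volume {p : ℝ × ℝ | p ∈ Icc (0 : ℝ) 1 ×ˢ Icc (0 : ℝ) 2 ∧ p.2 ≤ p.1} = 1 / 2 ∧
    (∀ x ∈ Icc (0 : ℝ) 1, ∀ y ∈ Icc (0 : ℝ) 2, x ≠ y →
      HasDerivAt (fun x' : ℝ => if 0 ≤ x' - y then (1 : ℝ) else 0) 0 x ∧
      HasDerivAt (fun y' : ℝ => if 0 ≤ x - y' then (1 : ℝ) else 0) 0 y ∧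
      -(0 : ℝ) - 0 - (if 0 ≤ x - y then (1 : ℝ) else 0) =
        -(if 0 ≤ x - y then (1 : ℝ) else 0)) ∧
    (∀ x ∈ Icc (0 : ℝ) 1,
      (if 0 ≤ x - 0 then (1 : ℝ) else 0) =
        ∫ p in Icc (0 : ℝ) 1 ×ˢ Icc (0 : ℝ) 2,
          (2 * if 0 ≤ x then (1 : ℝ) else 0) *
            (if 0 ≤ p.1 - p.2 then (1 : ℝ) else 0)) ∧
    (∀ y ∈ Icc (0 : ℝ) 2,
      (if (0 : ℝ) ≤ 0 - y then (1 : ℝ) else 0) =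
        ∫ p in Icc (0 : ℝ) 1 ×ˢ Icc (0 : ℝ) 2,
          (2 * if y ≤ 0 then (1 : ℝ) else 0) *
            (if 0 ≤ p.1 - p.2 then (1 : ℝ) else 0)) := by
  have mass : ∫ p in Icc (0 : ℝ) 1 ×ˢ Icc (0 : ℝ) 2,
      (if 0 ≤ p.1 - p.2 then (1 : ℝ) else 0) = 1 / 2 := by
    simpa using setIntegral_ite_sub_nonneg zero_le_one one_le_two
  refine ⟨?_, fun x _ y _ hxy => ⟨?_, ?_, by ring⟩, fun x _ => ?_, fun y _ => ?_⟩
  · rw [volume_triangle zero_le_one one_le_two]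
    norm_num [ENNReal.ofReal_div_of_pos]
  · exact hasDerivAt_ite_nonneg_of_ne_zero (g := (· - y)) (by fun_prop) (sub_ne_zero.2 hxy) 1 0
  · exact hasDerivAt_ite_nonneg_of_ne_zero (g := (x - ·)) (by fun_prop) (sub_ne_zero.2 hxy) 1 0
  · rw [integral_const_mul, mass, sub_zero]
    split_ifs <;> norm_num
  · rw [integral_const_mul, mass]
    simp only [zero_sub, neg_nonneg]
    split_ifs <;> norm_num
end

section
/- Let λ be a real number. There exists a nonzero continuously differentiable function φ : [0, 2] → ℝ satisfying −φ′(x) − φ(x) = λ φ(x) for all x ∈ [0, 2] and the boundary condition φ(0) = ∫_{0}^{2} e^{−σ} φ(σ) dσ, if and only if λ ≠ −2 and 1 − e^{−2λ−4} = λ + 2 (equivalently, (1 − e^{−2λ−4})/(λ + 2) = 1). -/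
/-!
An eigenfunction solves the linear equation `φ' = -(1 + λ) φ` on `[0, 2]`, so it is
`φ(0) e^{-(1+λ)x}` there; in particular `φ(0) ≠ 0`. The boundary condition then says exactly
that `∫₀² e^{-(2+λ)σ} dσ = 1`. Writing `c = -(2 + λ)`, this integral is `(e^{2c} - 1)/c` for
`c ≠ 0` and `2` for `c = 0`, which gives the characteristic equation.
-/

open Real Set

theorem eq_mul_exp_of_hasDerivAt_mul {φ : ℝ → ℝ} {a b k : ℝ}
    (hφ : ∀ x ∈ Icc a b, HasDerivAt φ (k * φ x) x) :
    ∀ x ∈ Icc a b, φ x = φ a * exp (k * (x - a)) := by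
  set g : ℝ → ℝ := fun x => φ x * exp (-(k * (x - a)))
  have hg : ∀ x ∈ Icc a b, HasDerivAt g 0 x := by
    intro x hx
    have hexp : HasDerivAt (fun x => exp (-(k * (x - a)))) (exp (-(k * (x - a))) * -(k * 1)) x :=
      (((hasDerivAt_id x).sub_const a).const_mul k).neg.exp
    exact ((hφ x hx).mul hexp).congr_deriv (by ring)
  have hconst := constant_of_has_deriv_right_zero
    (fun x hx => (hg x hx).continuousAt.continuousWithinAt)
    (fun x hx => (hg x (Ico_subset_Icc_self hx)).hasDerivWithinAt)
  intro x hx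
  have hgx : φ x * exp (-(k * (x - a))) = φ a := by simpa [g] using hconst x hx
  rw [← hgx, mul_assoc, ← exp_add, neg_add_cancel, exp_zero, mul_one]

theorem mul_integral_exp_mul (a b c : ℝ) :
    c * ∫ x in a..b, exp (c * x) = exp (c * b) - exp (c * a) := by
  rw [← smul_eq_mul, intervalIntegral.smul_integral_comp_mul_left, integral_exp]

theorem integral_exp_mul_eq_one_iff {a : ℝ} (ha : a ≠ 1) (c : ℝ) :
    ∫ x in (0 : ℝ)..a, exp (c * x) = 1 ↔ c ≠ 0 ∧ exp (c * a) - 1 = c := by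
  have key := mul_integral_exp_mul 0 a c
  rw [mul_zero, exp_zero] at key
  constructor
  · intro h
    have hc : c ≠ 0 := by
      rintro rfl
      simp only [zero_mul, exp_zero, intervalIntegral.integral_const, sub_zero, smul_eq_mul,
        mul_one] at h
      exact ha h
    exact ⟨hc, by rw [← key, h, mul_one]⟩
  · rintro ⟨hc, hexp⟩
    exact mul_left_cancel₀ hc (by rw [key, hexp, mul_one])

theorem integral_exp_neg_two_add_mul_eq_one_iff (lam : ℝ) :
    ∫ x in (0 : ℝ)..2, exp (-(2 + lam) * x) = 1 ↔
      lam ≠ -2 ∧ 1 - exp (-2 * lam - 4) = lam + 2 := by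
  rw [integral_exp_mul_eq_one_iff (by norm_num), show -(2 + lam) * 2 = -2 * lam - 4 by ring]
  refine and_congr ⟨fun h h' => h (by linarith), fun h h' => h (by linarith)⟩ ?_
  constructor <;> intro h <;> linarith

theorem integral_exp_neg_mul_eq_of_eqOn {φ : ℝ → ℝ} {a b C k : ℝ}
    (hφ : EqOn φ (fun x => C * exp (k * x)) (uIcc a b)) :
    ∫ x in a..b, exp (-x) * φ x = C * ∫ x in a..b, exp ((k - 1) * x) := by
  rw [← intervalIntegral.integral_const_mul]
  refine intervalIntegral.integral_congr fun x hx => ?_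
  rw [hφ hx, show (k - 1) * x = k * x + -x by ring, exp_add]
  ring

/-- characteristic equation of the one-dimensional model on `[0, 2]` with
`μ ≡ 1` and `β(σ) = e^{−σ}`. There exists a nonzero `C¹` function `φ` on `[0, 2]` with
`−φ′ − φ = λφ` on `[0, 2]` and `φ(0) = ∫_0^2 e^{−σ} φ(σ) dσ` if and only if `λ ≠ −2` and
`1 − e^{−2λ−4} = λ + 2`. -/
theorem stmt15 (lam : ℝ) :
    (∃ φ : ℝ → ℝ, ContDiff ℝ 1 φ ∧ (∃ x ∈ Icc (0 : ℝ) 2, φ x ≠ 0) ∧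
        (∀ x ∈ Icc (0 : ℝ) 2, -deriv φ x - φ x = lam * φ x) ∧
        φ 0 = ∫ σ in (0 : ℝ)..2, Real.exp (-σ) * φ σ) ↔
      lam ≠ -2 ∧ 1 - Real.exp (-2 * lam - 4) = lam + 2 := by
  rw [← integral_exp_neg_two_add_mul_eq_one_iff, show -(2 + lam) = -(1 + lam) - 1 by ring]
  constructor
  · rintro ⟨φ, hφ, ⟨x₀, hx₀, hφx₀⟩, hode, hbc⟩
    have hderiv : ∀ x ∈ Icc (0 : ℝ) 2, HasDerivAt φ (-(1 + lam) * φ x) x := fun x hx =>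
      ((hφ.differentiable one_ne_zero) x).hasDerivAt.congr_deriv (by linarith [hode x hx])
    have hform : EqOn φ (fun x => φ 0 * exp (-(1 + lam) * x)) (uIcc 0 2) := fun x hx => by
      simpa using eq_mul_exp_of_hasDerivAt_mul hderiv x (by simpa using hx)
    have hφ0 : φ 0 ≠ 0 := fun h0 => hφx₀ (by simpa [h0] using hform (by simpa using hx₀))
    rw [integral_exp_neg_mul_eq_of_eqOn hform] at hbc
    exact (mul_eq_left₀ hφ0).mp hbc.symm
  · intro hI
    refine ⟨fun x => exp (-(1 + lam) * x), by fun_prop, ⟨0, by norm_num, by simp⟩,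
      fun x _ => ?_, ?_⟩
    · rw [((hasDerivAt_id' x).const_mul (-(1 + lam))).exp.deriv]
      ring
    · have hform : EqOn (fun x => exp (-(1 + lam) * x)) (fun x => 1 * exp (-(1 + lam) * x))
          (uIcc 0 2) := fun x _ => (one_mul _).symm
      rw [integral_exp_neg_mul_eq_of_eqOn hform, hI]
      simp
end
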